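/- arXiv:2104.06731 — 3 statements merged into one kernel-verified Lean document; each statement's English description precedes it below -/
import Mathlib

section
/- For every real polynomial p of degree at most 5, the integral of p over [x_i, x_{i+1}] equals (Δx/240) · (p(x_{i-1}) + 119·p(x_i) + 119·p(x_{i+1}) + p(x_{i+2}) + 22·Δx·p'(x_i) − 22·Δx·p'(x_{i+1})). (Exactness of the HWENO6 quadrature q₀ obtained from the quintic Hermite interpolant on the big stencil S₀.) -/
/-!
Both sides of the quadrature rule are linear functionals of `p`, and the polynomials of
degree at most 5 are spanned by the monomials `X ^ k`, `k ≤ 5`. So it suffices to check the rule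
on these six monomials, where it is an identity between explicit polynomials in `xi` and `Δx`.
-/

open Polynomial

namespace Polynomial

noncomputable def intervalIntegralₗ (a b : ℝ) : ℝ[X] →ₗ[ℝ] ℝ where
  toFun p := ∫ x in a..b, p.eval x
  map_add' p q := by
    simp only [eval_add]
    exact intervalIntegral.integral_add (p.continuous.intervalIntegrable a b)
      (q.continuous.intervalIntegrable a b)
  map_smul' c p := by
    simp only [eval_smul, smul_eq_mul, RingHom.id_apply]
    exact intervalIntegral.integral_const_mul c _

end Polynomial

noncomputable def hweno6QuadratureQ0 (Δx xi : ℝ) : ℝ[X] →ₗ[ℝ] ℝ where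
  toFun p := (Δx / 240) *
    (p.eval (xi - Δx) + 119 * p.eval xi + 119 * p.eval (xi + Δx) +
      p.eval (xi + 2 * Δx) + 22 * Δx * p.derivative.eval xi -
      22 * Δx * p.derivative.eval (xi + Δx))
  map_add' p q := by
    simp only [eval_add, derivative_add]
    ring
  map_smul' c p := by
    simp only [eval_smul, derivative_smul, smul_eq_mul, RingHom.id_apply]
    ring

theorem intervalIntegralₗ_X_pow_eq_hweno6QuadratureQ0 (Δx xi : ℝ) {k : ℕ} (hk : k ≤ 5) :
    intervalIntegralₗ xi (xi + Δx) (X ^ k) = hweno6QuadratureQ0 Δx xi (X ^ k) := by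
  simp only [intervalIntegralₗ, hweno6QuadratureQ0, LinearMap.coe_mk, AddHom.coe_mk,
    eval_pow, eval_X, integral_pow, derivative_X_pow, eval_mul, eval_C]
  interval_cases k <;> norm_num <;> ring

theorem hweno6_quadrature_q0_exact_general (Δx : ℝ) (xi : ℝ)
    (p : Polynomial ℝ) (hp : p.degree ≤ 5) :
    ∫ x in xi..(xi + Δx), p.eval x =
      (Δx / 240) *
        (p.eval (xi - Δx) + 119 * p.eval xi + 119 * p.eval (xi + Δx) +
          p.eval (xi + 2 * Δx) + 22 * Δx * p.derivative.eval xi -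
          22 * Δx * p.derivative.eval (xi + Δx)) := by
  classical
  have hp_span : p ∈ Submodule.span ℝ
      ↑((Finset.range (5 + 1)).image fun k => (X : ℝ[X]) ^ k) := by
    rw [← degreeLE_eq_span_X_pow]
    exact mem_degreeLE.mpr hp
  refine LinearMap.eqOn_span (f := intervalIntegralₗ xi (xi + Δx))
    (g := hweno6QuadratureQ0 Δx xi) ?_ hp_span
  rintro _ hq
  obtain ⟨k, hk, rfl⟩ := Finset.mem_image.mp hq
  exact intervalIntegralₗ_X_pow_eq_hweno6QuadratureQ0 Δx xi (Finset.mem_range_succ_iff.mp hk)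

/-- Exactness of the HWENO6 quadrature `q₀` obtained from the quintic Hermite
interpolant on the big stencil `S₀ = {x_{i-1}, x_i, x_{i+1}, x_{i+2}}`:
for every real polynomial of degree at most 5, the integral over
`[x_i, x_{i+1}]` equals the Hermite quadrature formula. -/
theorem hweno6_quadrature_q0_exact (Δx : ℝ) (hΔx : 0 < Δx) (xi : ℝ)
    (p : Polynomial ℝ) (hp : p.degree ≤ 5) :
    ∫ x in xi..(xi + Δx), p.eval x =
      (Δx / 240) *
        (p.eval (xi - Δx) + 119 * p.eval xi + 119 * p.eval (xi + Δx) +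
          p.eval (xi + 2 * Δx) + 22 * Δx * p.derivative.eval xi -
          22 * Δx * p.derivative.eval (xi + Δx)) :=
  hweno6_quadrature_q0_exact_general Δx xi p hp
end

section
/- For every real polynomial p of degree at most 3, the integral of p over [x_i, x_{i+1}] equals (Δx/24) · (p(x_{i-1}) + 16·p(x_i) + 7·p(x_{i+1}) + 6·Δx·p'(x_i)). (Exactness of the quadrature q₁ obtained from the cubic Hermite interpolant on the small stencil S₁ = {x_{i-1}, x_i, x_{i+1}} with derivative data at x_i.) -/
/-! Both sides are linear in the coefficients of `p`, so after expanding `p` in the monomials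
`1, x, x², x³` the rule reduces to a polynomial identity in those coefficients, `xi` and `Δx`. -/

open Polynomial Finset

theorem Polynomial.integral_eval_eq_sum_range {p : ℝ[X]} {n : ℕ} (hn : p.natDegree < n)
    (a b : ℝ) :
    ∫ x in a..b, p.eval x =
      ∑ i ∈ range n, p.coeff i * ((b ^ (i + 1) - a ^ (i + 1)) / (i + 1)) := by
  simp_rw [eval_eq_sum_range' hn]
  rw [intervalIntegral.integral_finsetSum (f := fun i x => p.coeff i * x ^ i)
    fun i _ => (continuous_const.mul (continuous_pow i)).intervalIntegrable a b]
  simp only [intervalIntegral.integral_const_mul, integral_pow]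

theorem hweno6_quadrature_q1_exact_general (Δx : ℝ) (xi : ℝ)
    (p : Polynomial ℝ) (hp : p.degree ≤ 3) :
    ∫ x in xi..(xi + Δx), p.eval x =
      (Δx / 24) *
        (p.eval (xi - Δx) + 16 * p.eval xi + 7 * p.eval (xi + Δx) +
          6 * Δx * p.derivative.eval xi) := by
  have hp4 : p.natDegree < 4 := Nat.lt_succ_of_le (natDegree_le_of_degree_le hp)
  have hp'4 : p.derivative.natDegree < 4 := (natDegree_derivative_le p).trans_lt (by omega)
  rw [integral_eval_eq_sum_range hp4, eval_eq_sum_range' hp4, eval_eq_sum_range' hp4,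
    eval_eq_sum_range' hp4, eval_eq_sum_range' hp'4]
  simp only [sum_range_succ, sum_range_zero, coeff_derivative,
    coeff_eq_zero_of_natDegree_lt hp4]
  push_cast
  ring

/-- Exactness of the quadrature `q₁` obtained from the cubic Hermite interpolant
on the small stencil `S₁ = {x_{i-1}, x_i, x_{i+1}}` with derivative data at `x_i`:
for every real polynomial of degree at most 3, the integral over `[x_i, x_{i+1}]`
equals `(Δx/24)(p(x_{i-1}) + 16 p(x_i) + 7 p(x_{i+1}) + 6 Δx p'(x_i))`. -/
theorem hweno6_quadrature_q1_exact (Δx : ℝ) (hΔx : 0 < Δx) (xi : ℝ)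
    (p : Polynomial ℝ) (hp : p.degree ≤ 3) :
    ∫ x in xi..(xi + Δx), p.eval x =
      (Δx / 24) *
        (p.eval (xi - Δx) + 16 * p.eval xi + 7 * p.eval (xi + Δx) +
          6 * Δx * p.derivative.eval xi) :=
  hweno6_quadrature_q1_exact_general Δx xi p hp
end

section
/- For every real polynomial p of degree at most 3, the integral of p over [x_i, x_{i+1}] equals (Δx/24) · (7·p(x_i) + 16·p(x_{i+1}) + p(x_{i+2}) − 6·Δx·p'(x_{i+1})). (Exactness of the quadrature q₂ obtained from the cubic Hermite interpolant on the small stencil S₂ = {x_i, x_{i+1}, x_{i+2}} with derivative data at x_{i+1}.) -/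
/-! Expanding `p` in its coefficients and integrating term by term, both sides become the
same polynomial in `p.coeff 0, …, p.coeff 3`, `xi` and `Δx`. -/

open Polynomial

theorem Polynomial.intervalIntegral_eval_eq_sum_range {p : ℝ[X]} {n : ℕ} (hn : p.natDegree < n)
    (a b : ℝ) :
    ∫ x in a..b, p.eval x =
      ∑ i ∈ Finset.range n, p.coeff i * ((b ^ (i + 1) - a ^ (i + 1)) / (i + 1)) := by
  simp_rw [eval_eq_sum_range' hn]
  rw [intervalIntegral.integral_finsetSum fun i _ =>
    ((continuous_pow i).const_mul (p.coeff i)).intervalIntegrable a b]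
  simp only [intervalIntegral.integral_const_mul, integral_pow]

theorem hweno6_quadrature_q2_exact_general (Δx : ℝ) (xi : ℝ)
    (p : Polynomial ℝ) (hp : p.degree ≤ 3) :
    ∫ x in xi..(xi + Δx), p.eval x =
      (Δx / 24) *
        (7 * p.eval xi + 16 * p.eval (xi + Δx) + p.eval (xi + 2 * Δx) -
          6 * Δx * p.derivative.eval (xi + Δx)) := by
  have hn : p.natDegree < 4 := Nat.lt_succ_of_le (natDegree_le_of_degree_le hp)
  have hn' : p.derivative.natDegree < 3 := (natDegree_derivative_le p).trans_lt (by omega)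
  rw [intervalIntegral_eval_eq_sum_range hn, eval_eq_sum_range' hn, eval_eq_sum_range' hn,
    eval_eq_sum_range' hn, eval_eq_sum_range' hn']
  simp only [Finset.sum_range_succ, Finset.sum_range_zero, coeff_derivative]
  push_cast
  ring

/-- Exactness of the quadrature `q₂` obtained from the cubic Hermite interpolant
on the small stencil `S₂ = {x_i, x_{i+1}, x_{i+2}}` with derivative data at `x_{i+1}`:
for every real polynomial of degree at most 3, the integral over `[x_i, x_{i+1}]`
equals `(Δx/24)(7 p(x_i) + 16 p(x_{i+1}) + p(x_{i+2}) − 6 Δx p'(x_{i+1}))`. -/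
theorem hweno6_quadrature_q2_exact (Δx : ℝ) (hΔx : 0 < Δx) (xi : ℝ)
    (p : Polynomial ℝ) (hp : p.degree ≤ 3) :
    ∫ x in xi..(xi + Δx), p.eval x =
      (Δx / 24) *
        (7 * p.eval xi + 16 * p.eval (xi + Δx) + p.eval (xi + 2 * Δx) -
          6 * Δx * p.derivative.eval (xi + Δx)) :=
  hweno6_quadrature_q2_exact_general Δx xi p hp
end
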